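/- arXiv:2307.04506 — 2 statements merged into one kernel-verified Lean document; each statement's English description precedes it below -/
import Mathlib

section
/- In any optimal solution maximizing total traffic, there exists a threshold index ĩ ∈ [m] such that v_l = 0 for all l ≤ ĩ and u_j = n_j for all j > ĩ, where sources are sorted so that n_1 ≥ n_2 ≥ … ≥ n_m. -/
open Finset

/-- A pure routing profile in the loss network with `m` sources, where source `i`
has `n i` users: `u i` users at source `i` choose the direct path, and `r i j`
users at source `i` relay through source `j` (indirect path `(s_i, s_j, d)`). -/
structure Profile (m : ℕ) (n : Fin m → ℕ) where
  u : Fin m → ℕ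
  r : Fin m → Fin m → ℕ
  diag : ∀ i, r i i = 0
  total : ∀ i, u i + ∑ j, r i j = n i

namespace Profile

variable {m : ℕ} {n : Fin m → ℕ}

/-- Number of users relaying through source `j`. -/
def v (p : Profile m n) (j : Fin m) : ℕ := ∑ i, p.r i j

/-- Traffic rate on the direct link `(s_i, d)`: `T_i = u_i φ + v_i q̄ φ`,
where `q̄` is the sidelink success probability. -/
noncomputable def T (φ qb : ℝ) (p : Profile m n) (i : Fin m) : ℝ :=
  (p.u i : ℝ) * φ + (p.v i : ℝ) * qb * φ

/-- Total traffic rate arriving at the destination: `TR = Σ_i μ T_i/(T_i + μ)`. -/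
noncomputable def TR (φ qb μ : ℝ) (p : Profile m n) : ℝ :=
  ∑ i, μ * p.T φ qb i / (p.T φ qb i + μ)

/-- Nash equilibrium: no single user can strictly decrease its loss rate by a
unilateral change of route.  A direct user at `s_i` (present iff `u i > 0`) may
deviate to the indirect path via any `j ≠ i`; a user at `s_i` relaying via `l`
(present iff `r i l > 0`) may deviate to its direct path or to the indirect path
via any other `j`.  Loss rates follow the loss-network formulas, with the traffic
of the target link adjusted for the deviating user's own flow. -/
noncomputable def isNE (φ q μ : ℝ) (p : Profile m n) : Prop :=
  (∀ i j : Fin m, j ≠ i → 0 < p.u i →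
      φ * p.T φ (1 - q) i / (p.T φ (1 - q) i + μ) ≤
        q * φ + (1 - q) * φ * (p.T φ (1 - q) j + (1 - q) * φ) /
          (p.T φ (1 - q) j + (1 - q) * φ + μ)) ∧
  (∀ i l : Fin m, l ≠ i → 0 < p.r i l →
      (q * φ + (1 - q) * φ * p.T φ (1 - q) l / (p.T φ (1 - q) l + μ) ≤
        φ * (p.T φ (1 - q) i + φ) / (p.T φ (1 - q) i + φ + μ)) ∧
      (∀ j : Fin m, j ≠ i → j ≠ l →
        q * φ + (1 - q) * φ * p.T φ (1 - q) l / (p.T φ (1 - q) l + μ) ≤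
          q * φ + (1 - q) * φ * (p.T φ (1 - q) j + (1 - q) * φ) /
            (p.T φ (1 - q) j + (1 - q) * φ + μ)))

end Profile

/-! The carried traffic `μ T / (T + μ)` of a link is increasing and concave in its load `T`.
Comparing an optimal profile with the profiles obtained by rerouting one or two users gives:
a source through which someone relays has no relaying users of its own, and if a user of `i`
relays through `l` then `T_l < T_i + q̄φ` and `T_l ≤ T_k + q̄φ` for every other `k`.
Let `j` be the last source with a relaying user, say through `k`, and suppose some user relays
through `l ≤ j`. Chaining the bounds through `k` gives `T_l < T_j + 2q̄φ`, whereas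
`u_l = n_l ≥ n_j > u_j`, `v_j = 0` and `v_l ≥ 1` give `T_l ≥ T_j + φ + q̄φ`; so `φ < q̄φ`. -/

noncomputable def carried (μ x : ℝ) : ℝ := μ * x / (x + μ)

section carried

variable {μ : ℝ} (hμ : 0 < μ)
include hμ

lemma carried_strictMonoOn : StrictMonoOn (carried μ) (Set.Ici 0) := by
  intro x hx y _ hxy
  simp only [Set.mem_Ici] at hx
  unfold carried
  rw [div_lt_div_iff₀ (by linarith) (by linarith)]
  nlinarith [mul_pos (mul_pos hμ hμ) (sub_pos.mpr hxy)]

lemma carried_lt_carried {x y : ℝ} (hx : 0 ≤ x) (hxy : x < y) : carried μ x < carried μ y :=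
  carried_strictMonoOn hμ hx (hx.trans hxy.le) hxy

lemma carried_add_sub_carried {x s : ℝ} (hx : 0 ≤ x) (hs : 0 ≤ s) :
    carried μ (x + s) - carried μ x = μ ^ 2 * s / ((x + μ) * (x + s + μ)) := by
  unfold carried
  rw [div_sub_div _ _ (by positivity) (by positivity),
    div_eq_div_iff (by positivity) (by positivity)]
  ring

lemma carried_increment_le {x y s : ℝ} (hx : 0 ≤ x) (hxy : x ≤ y) (hs : 0 ≤ s) :
    carried μ (y + s) - carried μ y ≤ carried μ (x + s) - carried μ x := by
  rw [carried_add_sub_carried hμ hx hs, carried_add_sub_carried hμ (hx.trans hxy) hs]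
  have hy : 0 ≤ y := by linarith
  gcongr

lemma carried_increment_lt {x y s : ℝ} (hx : 0 ≤ x) (hxy : x < y) (hs : 0 < s) :
    carried μ (y + s) - carried μ y < carried μ (x + s) - carried μ x := by
  rw [carried_add_sub_carried hμ hx hs.le, carried_add_sub_carried hμ (hx.trans hxy.le) hs.le]
  have hy : 0 ≤ y := by linarith
  gcongr

end carried

namespace Profile

variable {m : ℕ} {n : Fin m → ℕ}

lemma u_le (p : Profile m n) (i : Fin m) : p.u i ≤ n i :=
  p.total i ▸ Nat.le_add_right _ _

lemma u_lt_iff (p : Profile m n) (i : Fin m) : p.u i < n i ↔ ∃ l, 0 < p.r i l := by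
  rw [← p.total i, Nat.lt_add_right_iff_pos, Finset.sum_pos_iff]
  simp

lemma v_pos_iff (p : Profile m n) (l : Fin m) : 0 < p.v l ↔ ∃ i, 0 < p.r i l := by
  simp [v, Finset.sum_pos_iff]

lemma ne_of_r_pos (p : Profile m n) {i l : Fin m} (h : 0 < p.r i l) : i ≠ l := by
  rintro rfl
  simp [p.diag] at h

lemma T_nonneg (p : Profile m n) {φ qb : ℝ} (hφ : 0 ≤ φ) (hqb : 0 ≤ qb) (i : Fin m) :
    0 ≤ p.T φ qb i := by
  unfold T; positivity

lemma TR_eq_sum_carried (p : Profile m n) (φ qb μ : ℝ) :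
    p.TR φ qb μ = ∑ i, carried μ (p.T φ qb i) :=
  rfl

lemma TR_sub_TR (p p' : Profile m n) (φ qb μ : ℝ) {a b : Fin m} (hab : a ≠ b)
    (h : ∀ x, x ≠ a → x ≠ b → p'.T φ qb x = p.T φ qb x) :
    p'.TR φ qb μ - p.TR φ qb μ = (carried μ (p'.T φ qb a) - carried μ (p.T φ qb a)) +
      (carried μ (p'.T φ qb b) - carried μ (p.T φ qb b)) := by
  rw [TR_eq_sum_carried, TR_eq_sum_carried, ← sum_sub_distrib]
  exact Fintype.sum_eq_add a b hab fun x hx => by simp [h x hx.1 hx.2]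

lemma TR_lt_TR {p p' : Profile m n} {φ qb μ : ℝ} (hφ : 0 ≤ φ) (hqb : 0 ≤ qb) (hμ : 0 < μ)
    (hle : ∀ x, p.T φ qb x ≤ p'.T φ qb x) {a : Fin m} (hlt : p.T φ qb a < p'.T φ qb a) :
    p.TR φ qb μ < p'.TR φ qb μ := by
  have hT := p.T_nonneg hφ hqb
  have hT' x : 0 ≤ p'.T φ qb x := (hT x).trans (hle x)
  have mono := carried_strictMonoOn hμ
  rw [TR_eq_sum_carried, TR_eq_sum_carried]
  exact sum_lt_sum (fun x _ => (mono.le_iff_le (hT x) (hT' x)).2 (hle x))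
    ⟨a, mem_univ a, (mono.lt_iff_lt (hT a) (hT' a)).2 hlt⟩

def relay (i l : Fin m) (a b : Fin m) : ℕ := if a = i ∧ b = l then 1 else 0

lemma sum_relay_apply (i l a : Fin m) : ∑ b, relay i l a b = if a = i then 1 else 0 := by
  simp [relay, ite_and]

lemma sum_relay_apply_right (i l b : Fin m) : ∑ a, relay i l a b = if b = l then 1 else 0 := by
  simp [relay, ite_and]

lemma relay_apply_self {i l : Fin m} (h : i ≠ l) (a : Fin m) : relay i l a a = 0 := by
  simp only [relay, ite_eq_right_iff]
  rintro ⟨rfl, rfl⟩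
  exact absurd rfl h

lemma relay_le (p : Profile m n) {i l : Fin m} (h : 0 < p.r i l) : relay i l ≤ p.r := by
  intro a b
  unfold relay
  split_ifs with hab
  · obtain ⟨rfl, rfl⟩ := hab
    exact h
  · exact Nat.zero_le _

lemma sum_sub_relay (p : Profile m n) {i l : Fin m} (h : 0 < p.r i l) (a : Fin m) :
    ∑ b, (p.r - relay i l) a b + (if a = i then 1 else 0) = ∑ b, p.r a b := by
  rw [← sum_relay_apply i l a, ← sum_add_distrib]
  exact sum_congr rfl fun b _ => tsub_add_cancel_of_le (p.relay_le h a b)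

lemma sum_sub_relay_right (p : Profile m n) {i l : Fin m} (h : 0 < p.r i l) (b : Fin m) :
    ∑ a, (p.r - relay i l) a b + (if b = l then 1 else 0) = p.v b := by
  rw [← sum_relay_apply_right i l b, ← sum_add_distrib]
  exact sum_congr rfl fun a _ => tsub_add_cancel_of_le (p.relay_le h a b)

def toDirect (p : Profile m n) (i l : Fin m) (h : 0 < p.r i l) : Profile m n where
  u := p.u + Pi.single i 1
  r := p.r - relay i l
  diag a := by simp [p.diag]
  total a := by
    have := p.sum_sub_relay h a
    have := p.total a
    simp only [Pi.add_apply, Pi.single_apply] at *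
    omega

def switchRelay (p : Profile m n) (i l k : Fin m) (h : 0 < p.r i l) (hk : k ≠ i) :
    Profile m n where
  u := p.u
  r := p.r - relay i l + relay i k
  diag a := by simp [p.diag, relay_apply_self hk.symm]
  total a := by
    have := p.sum_sub_relay h a
    have := p.total a
    simp only [Pi.add_apply, sum_add_distrib, sum_relay_apply] at *
    omega

section moves

variable (p : Profile m n) {i l : Fin m} (h : 0 < p.r i l) (φ qb : ℝ)

lemma T_toDirect (x : Fin m) : (p.toDirect i l h).T φ qb x =
    p.T φ qb x + (if x = i then φ else 0) - (if x = l then qb * φ else 0) := by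
  have hu : (p.toDirect i l h).u x = p.u x + if x = i then 1 else 0 := by
    simp [toDirect, Pi.single_apply]
  have hv : (p.toDirect i l h).v x + (if x = l then 1 else 0) = p.v x :=
    p.sum_sub_relay_right h x
  rw [T, T, hu, ← hv]
  split_ifs <;> push_cast <;> ring

lemma T_switchRelay {k : Fin m} (hk : k ≠ i) (x : Fin m) : (p.switchRelay i l k h hk).T φ qb x =
    p.T φ qb x + (if x = k then qb * φ else 0) - (if x = l then qb * φ else 0) := by
  have hv : (p.switchRelay i l k h hk).v x + (if x = l then 1 else 0) =
      p.v x + (if x = k then 1 else 0) := by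
    rw [← p.sum_sub_relay_right h x, ← sum_relay_apply_right i k x]
    simp only [v, switchRelay, Pi.add_apply, sum_add_distrib]
    ring
  have hv' := congrArg (Nat.cast : ℕ → ℝ) hv
  simp only [T, show (p.switchRelay i l k h hk).u = p.u from rfl]
  push_cast at hv'
  split_ifs at hv' ⊢ <;> linear_combination (qb * φ) * hv'

end moves

def IsOptimal (φ qb μ : ℝ) (p : Profile m n) : Prop :=
  ∀ p' : Profile m n, p'.TR φ qb μ ≤ p.TR φ qb μ

namespace IsOptimal

variable {p : Profile m n} {φ qb μ : ℝ}

lemma T_lt_T_add_of_r_pos (hopt : p.IsOptimal φ qb μ) (hφ : 0 < φ) (hμ : 0 < μ)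
    (hqb0 : 0 ≤ qb) (hqb1 : qb < 1) {i l : Fin m} (h : 0 < p.r i l) :
    p.T φ qb l < p.T φ qb i + qb * φ := by
  by_contra! hle
  have hil := p.ne_of_r_pos h
  have hdiff := TR_sub_TR p (p.toDirect i l h) φ qb μ hil
    fun x hxi hxl => by simp [T_toDirect, hxi, hxl]
  simp only [T_toDirect, if_pos, if_neg hil, if_neg hil.symm, add_zero, sub_zero] at hdiff
  have hTi := p.T_nonneg hφ.le hqb0 i
  have hconc := carried_increment_le hμ hTi (le_sub_iff_add_le.2 hle) (by positivity : 0 ≤ qb * φ)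
  have hmono := carried_lt_carried hμ (by positivity) (by nlinarith :
    p.T φ qb i + qb * φ < p.T φ qb i + φ)
  rw [sub_add_cancel] at hconc
  linarith [hopt (p.toDirect i l h)]

lemma T_le_T_add_of_r_pos (hopt : p.IsOptimal φ qb μ) (hφ : 0 < φ) (hμ : 0 < μ)
    (hqb0 : 0 < qb) {i l k : Fin m} (h : 0 < p.r i l) (hki : k ≠ i) (hkl : k ≠ l) :
    p.T φ qb l ≤ p.T φ qb k + qb * φ := by
  by_contra! hlt
  have hdiff := TR_sub_TR p (p.switchRelay i l k h hki) φ qb μ hkl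
    fun x hxk hxl => by simp [T_switchRelay, hxk, hxl]
  simp only [T_switchRelay, if_pos, if_neg hkl, if_neg hkl.symm, add_zero, sub_zero] at hdiff
  have hconc := carried_increment_lt hμ (p.T_nonneg hφ.le hqb0.le k) (lt_sub_iff_add_lt.2 hlt)
    (by positivity : 0 < qb * φ)
  rw [sub_add_cancel] at hconc
  linarith [hopt (p.switchRelay i l k h hki)]

lemma r_eq_zero_of_r_pos (hopt : p.IsOptimal φ qb μ) (hφ : 0 < φ) (hμ : 0 < μ)
    (hqb0 : 0 ≤ qb) (hqb1 : qb < 1) {i l : Fin m} (h : 0 < p.r i l) (k : Fin m) :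
    p.r l k = 0 := by
  by_contra hlk
  have hlk := Nat.pos_of_ne_zero hlk
  have hil := p.ne_of_r_pos h
  have hgain : qb * φ < φ := by nlinarith
  -- `l`'s user goes direct and `i`'s user moves from `l` to `k` (to its direct path if `k = i`):
  -- no load falls and that of `l` rises by `φ - q̄φ`.
  by_cases hki : k = i
  · subst hki
    have h' : 0 < (p.toDirect k l h).r l k := by simpa [toDirect, relay, hil.symm] using hlk
    refine (TR_lt_TR hφ.le hqb0 hμ (p' := (p.toDirect k l h).toDirect l k h') (a := l)
      (fun x => ?_) ?_).not_ge (hopt _)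
    · simp only [T_toDirect]; split_ifs <;> linarith
    · simp [T_toDirect, hil.symm]; linarith
  · have h' : 0 < (p.switchRelay i l k h hki).r l k := by
      simpa [switchRelay, relay, hil.symm] using hlk
    refine (TR_lt_TR hφ.le hqb0 hμ (p' := (p.switchRelay i l k h hki).toDirect l k h') (a := l)
      (fun x => ?_) ?_).not_ge (hopt _)
    · simp only [T_toDirect, T_switchRelay]; split_ifs <;> linarith
    · simp [T_toDirect, T_switchRelay, p.ne_of_r_pos hlk]; linarith

lemma v_eq_zero_of_n_le (hopt : p.IsOptimal φ qb μ) (hφ : 0 < φ) (hμ : 0 < μ)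
    (hqb0 : 0 < qb) (hqb1 : qb < 1) {j l : Fin m} (hj : p.u j < n j) (hn : n j ≤ n l) :
    p.v l = 0 := by
  by_contra hvl
  obtain ⟨i, hil⟩ := (p.v_pos_iff l).1 (Nat.pos_of_ne_zero hvl)
  obtain ⟨k, hjk⟩ := (p.u_lt_iff j).1 hj
  have no_relay {a b : Fin m} (hab : 0 < p.r a b) (c : Fin m) : p.r b c = 0 :=
    hopt.r_eq_zero_of_r_pos hφ hμ hqb0.le hqb1 hab c
  have hvj : p.v j = 0 := by
    by_contra hvj
    obtain ⟨i', hi'⟩ := (p.v_pos_iff j).1 (Nat.pos_of_ne_zero hvj)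
    exact hjk.ne' (no_relay hi' k)
  have hul : ¬p.u l < n l := fun hlt ↦ by
    obtain ⟨k', hk'⟩ := (p.u_lt_iff l).1 hlt
    exact hk'.ne' (no_relay hil k')
  have hTk := hopt.T_lt_T_add_of_r_pos hφ hμ hqb0.le hqb1 hjk
  have hTl : p.T φ qb l ≤ p.T φ qb k + qb * φ := by
    rcases eq_or_ne k l with rfl | hkl
    · exact le_add_of_nonneg_right (by positivity)
    rcases eq_or_ne k i with rfl | hki
    · exact (hopt.T_lt_T_add_of_r_pos hφ hμ hqb0.le hqb1 hil).le
    exact hopt.T_le_T_add_of_r_pos hφ hμ hqb0 hil hki hkl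
  have hu : (p.u j : ℝ) + 1 ≤ p.u l := by exact_mod_cast (by omega : p.u j + 1 ≤ p.u l)
  have hv : (1 : ℝ) ≤ p.v l := by exact_mod_cast Nat.pos_of_ne_zero hvl
  simp only [T, hvj, Nat.cast_zero] at hTk hTl
  nlinarith [mul_le_mul_of_nonneg_right hu hφ.le,
    mul_le_mul_of_nonneg_right hv (mul_pos hqb0 hφ).le]

end IsOptimal

end Profile

/-- In any optimal solution, with sources sorted so that `n 1 ≥ n 2 ≥ … ≥ n m`,
there is a threshold index `ĩ` such that no user relays through any source
`l ≤ ĩ`, and all users of every source `j > ĩ` choose the direct path. -/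
theorem opt_threshold {m : ℕ} {n : Fin m → ℕ} (hm : 0 < m) (φ μ q : ℝ)
    (hφ : 0 < φ) (hμ : 0 < μ) (hq0 : 0 < q) (hq1 : q < 1)
    (hsorted : ∀ i j : Fin m, i ≤ j → n j ≤ n i)
    (p : Profile m n)
    (hopt : ∀ p' : Profile m n, p'.TR φ (1 - q) μ ≤ p.TR φ (1 - q) μ) :
    ∃ itilde : Fin m,
      (∀ l : Fin m, l ≤ itilde → p.v l = 0) ∧
      (∀ j : Fin m, itilde < j → p.u j = n j) := by
  have hopt : p.IsOptimal φ (1 - q) μ := hopt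
  by_cases hrelay : ∃ j, p.u j < n j
  · obtain ⟨j, hj, hmax⟩ := (univ.filter fun j ↦ p.u j < n j).exists_max_image id
      (by simpa [Finset.Nonempty] using hrelay)
    refine ⟨j, fun l hl ↦ ?_, fun j' hj' ↦ ?_⟩
    · exact hopt.v_eq_zero_of_n_le hφ hμ (by linarith) (by linarith) (mem_filter.1 hj).2
        (hsorted l j hl)
    · by_contra hne
      exact (hmax j' (mem_filter.2 ⟨mem_univ _, (p.u_le j').lt_of_ne hne⟩)).not_gt hj'
  · push Not at hrelay
    refine ⟨⟨0, hm⟩, fun l _ ↦ ?_, fun j _ ↦ (p.u_le j).antisymm (hrelay j)⟩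
    by_contra hvl
    obtain ⟨i, hi⟩ := (p.v_pos_iff l).1 (Nat.pos_of_ne_zero hvl)
    exact (hrelay i).not_gt ((p.u_lt_iff i).2 ⟨l, hi⟩)
end

section
/- In the two-source game, if u_1 = 0 and u_2 > 0, then the profile cannot be a Nash equilibrium. -/
/-- Nash-equilibrium property for the two-source loss network.  Source `s_1` has
`u1` direct users and `v2` users relaying via `s_2`; source `s_2` has `u2` direct
users and `v1` users relaying via `s_1`.  Traffic rates are `T1 = u1 φ + v1 q̄ φ`
and `T2 = u2 φ + v2 q̄ φ` with `q̄ = 1 - q`.  The four conditions state that no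
direct user and no relaying user can strictly decrease its loss rate by switching
its route (target traffic adjusted for the deviating user's own flow). -/
noncomputable def NE2 (φ μ q : ℝ) (u1 v1 u2 v2 : ℕ) : Prop :=
  (0 < u1 →
      φ * ((u1 : ℝ) * φ + (v1 : ℝ) * (1 - q) * φ) /
          ((u1 : ℝ) * φ + (v1 : ℝ) * (1 - q) * φ + μ) ≤
        q * φ + (1 - q) * φ *
            ((u2 : ℝ) * φ + ((v2 : ℝ) + 1) * (1 - q) * φ) /
          ((u2 : ℝ) * φ + ((v2 : ℝ) + 1) * (1 - q) * φ + μ)) ∧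
  (0 < v2 →
      q * φ + (1 - q) * φ *
          ((u2 : ℝ) * φ + (v2 : ℝ) * (1 - q) * φ) /
          ((u2 : ℝ) * φ + (v2 : ℝ) * (1 - q) * φ + μ) ≤
        φ * (((u1 : ℝ) + 1) * φ + (v1 : ℝ) * (1 - q) * φ) /
          (((u1 : ℝ) + 1) * φ + (v1 : ℝ) * (1 - q) * φ + μ)) ∧
  (0 < u2 →
      φ * ((u2 : ℝ) * φ + (v2 : ℝ) * (1 - q) * φ) /
          ((u2 : ℝ) * φ + (v2 : ℝ) * (1 - q) * φ + μ) ≤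
        q * φ + (1 - q) * φ *
            ((u1 : ℝ) * φ + ((v1 : ℝ) + 1) * (1 - q) * φ) /
          ((u1 : ℝ) * φ + ((v1 : ℝ) + 1) * (1 - q) * φ + μ)) ∧
  (0 < v1 →
      q * φ + (1 - q) * φ *
          ((u1 : ℝ) * φ + (v1 : ℝ) * (1 - q) * φ) /
          ((u1 : ℝ) * φ + (v1 : ℝ) * (1 - q) * φ + μ) ≤
        φ * (((u2 : ℝ) + 1) * φ + (v2 : ℝ) * (1 - q) * φ) /
          (((u2 : ℝ) + 1) * φ + (v2 : ℝ) * (1 - q) * φ + μ))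

/-!
With `u1 = 0` every user of `s_1` relays via `s_2`, whose load is `a = u2 φ + v2 q̄ φ`. Switching
to direct sending would load `s_1` with `b = φ + v1 q̄ φ ≤ a`, because `v1 < n2 ≤ n1 = v2` and
`u2 ≥ 1`. Since `T ↦ T / (T + μ)` is increasing and below `1`, the direct loss `φ b / (b + μ)` is
strictly less than the relayed loss `q φ + q̄ φ a / (a + μ)`, so the relaying user deviates.
-/

theorem div_add_le_div_add {μ x y : ℝ} (hμ : 0 < μ) (hx : 0 ≤ x) (hxy : x ≤ y) :
    x / (x + μ) ≤ y / (y + μ) := by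
  rw [div_le_div_iff₀ (by linarith) (by linarith)]
  nlinarith

theorem direct_loss_lt_relay_loss {φ μ q a b : ℝ} (hφ : 0 < φ) (hμ : 0 < μ) (hq : 0 < q)
    (hb : 0 ≤ b) (hba : b ≤ a) :
    φ * b / (b + μ) < q * φ + (1 - q) * φ * a / (a + μ) := by
  have ha_lt : a / (a + μ) < 1 := (div_lt_one (by linarith)).2 (by linarith)
  calc φ * b / (b + μ) = φ * (b / (b + μ)) := mul_div_assoc _ _ _
    _ ≤ φ * (a / (a + μ)) := mul_le_mul_of_nonneg_left (div_add_le_div_add hμ hb hba) hφ.le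
    _ < q * φ + (1 - q) * φ * (a / (a + μ)) := by nlinarith [mul_pos hq hφ]
    _ = q * φ + (1 - q) * φ * a / (a + μ) := by rw [mul_div_assoc]

theorem two_source_not_NE_case1b_general (φ μ q : ℝ) (hφ : 0 < φ) (hμ : 0 < μ)
    (hq0 : 0 < q) (hq1 : q < 1) (n1 n2 u1 v1 u2 v2 : ℕ)
    (hn : n2 ≤ n1) (h1 : u1 + v2 = n1) (h2 : u2 + v1 = n2)
    (hu1 : u1 = 0) (hu2 : 0 < u2) :
    ¬ NE2 φ μ q u1 v1 u2 v2 := by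
  rintro ⟨-, hrelay, -, -⟩
  subst hu1
  have hv2 : 0 < v2 := by omega
  have hv12 : (v1 : ℝ) ≤ v2 := by exact_mod_cast (by omega : v1 ≤ v2)
  have hu2' : (1 : ℝ) ≤ u2 := by exact_mod_cast hu2
  have hq' : 0 ≤ 1 - q := by linarith
  refine (direct_loss_lt_relay_loss hφ hμ hq0 ?_ ?_).not_ge (hrelay hv2)
  · positivity
  · push_cast [zero_add]
    gcongr

/-- In the two-source game (with `n1 ≥ n2 ≥ 1`, `u1 + v2 = n1`, `u2 + v1 = n2`),
if `u1 = 0` and `u2 > 0`, then the profile cannot be a Nash equilibrium. -/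
theorem two_source_not_NE_case1b (φ μ q : ℝ) (hφ : 0 < φ) (hμ : 0 < μ)
    (hq0 : 0 < q) (hq1 : q < 1) (n1 n2 u1 v1 u2 v2 : ℕ)
    (hn : n2 ≤ n1) (hn2 : 1 ≤ n2) (h1 : u1 + v2 = n1) (h2 : u2 + v1 = n2)
    (hu1 : u1 = 0) (hu2 : 0 < u2) :
    ¬ NE2 φ μ q u1 v1 u2 v2 :=
  two_source_not_NE_case1b_general φ μ q hφ hμ hq0 hq1 n1 n2 u1 v1 u2 v2 hn h1 h2 hu1 hu2
end
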